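/- Let φ be a continuous flow on a topological space X. If x ∈ int(ω(x)), then x is positively recurrent and closure(O(x)) = ω(x); in particular, a locally dense ω-limit set containing its generating point in its interior is the closure of a non-closed recurrent orbit (a Q-set). -/

import Mathlib

/-! Since `ω(x)` is closed and invariant under the flow, it contains the closure of the orbit of
each of its points; as `x ∈ int ω(x) ⊆ ω(x)`, this gives `closure O(x) ⊆ ω(x)`, and the reverse
inclusion holds for every point. -/

section OmegaLimit

variable {T X : Type*} [TopologicalSpace X] {φ : T → X → X} {x : X}

theorem iInter_closure_forward_subset_closure_orbit [LT T] [Zero T] :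
    (⋂ n : T, closure {y | ∃ t > n, φ t x = y}) ⊆ closure {z | ∃ t : T, φ t x = z} := by
  intro y hy
  refine closure_mono ?_ (Set.mem_iInter.1 hy 0)
  rintro z ⟨t, -, rfl⟩
  exact ⟨t, rfl⟩

section OrderedGroup

variable [AddCommGroup T] [LinearOrder T] [IsOrderedAddMonoid T]

theorem map_mem_iInter_closure_forward {s : T} {y : X} (hφs : Continuous (φ s))
    (hadd : ∀ t, φ (s + t) x = φ s (φ t x))
    (hy : y ∈ ⋂ n : T, closure {y | ∃ t > n, φ t x = y}) :
    φ s y ∈ ⋂ n : T, closure {y | ∃ t > n, φ t x = y} := by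
  refine Set.mem_iInter.2 fun n => map_mem_closure hφs (Set.mem_iInter.1 hy (n - s)) ?_
  rintro _ ⟨t, ht, rfl⟩
  exact ⟨s + t, sub_lt_iff_lt_add'.1 ht, hadd t⟩

theorem closure_orbit_subset_iInter_closure_forward (hφ : ∀ s, Continuous (φ s))
    (hadd : ∀ s t, φ (s + t) x = φ s (φ t x))
    (hx : x ∈ ⋂ n : T, closure {y | ∃ t > n, φ t x = y}) :
    closure {z | ∃ t : T, φ t x = z} ⊆ ⋂ n : T, closure {y | ∃ t > n, φ t x = y} := by
  refine closure_minimal ?_ (isClosed_iInter fun _ => isClosed_closure)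
  rintro _ ⟨s, rfl⟩
  exact map_mem_iInter_closure_forward (hφ s) (hadd s) hx

end OrderedGroup

end OmegaLimit

theorem mem_interior_omega_implies_recurrent_Qset_general
    {X : Type*} [TopologicalSpace X] (φ : ℝ → X → X)
    (hcont : Continuous fun p : ℝ × X => φ p.1 p.2)
    (hadd : ∀ s t x, φ (s + t) x = φ s (φ t x))
    (x : X)
    (hint : x ∈ interior (⋂ n : ℝ, closure {y | ∃ t > n, φ t x = y})) :
    x ∈ (⋂ n : ℝ, closure {y | ∃ t > n, φ t x = y}) ∧
      closure {z | ∃ t : ℝ, φ t x = z} =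
        (⋂ n : ℝ, closure {y | ∃ t > n, φ t x = y}) := by
  have hx := interior_subset hint
  have hφ : ∀ s, Continuous (φ s) := fun s => hcont.comp (Continuous.prodMk_right s)
  exact ⟨hx, (closure_orbit_subset_iInter_closure_forward hφ (fun s t => hadd s t x) hx).antisymm
    iInter_closure_forward_subset_closure_orbit⟩

theorem mem_interior_omega_implies_recurrent_Qset
    {X : Type*} [TopologicalSpace X] (φ : ℝ → X → X)
    (hcont : Continuous fun p : ℝ × X => φ p.1 p.2)
    (h0 : ∀ x, φ 0 x = x)
    (hadd : ∀ s t x, φ (s + t) x = φ s (φ t x))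
    (x : X)
    (hint : x ∈ interior (⋂ n : ℝ, closure {y | ∃ t > n, φ t x = y})) :
    x ∈ (⋂ n : ℝ, closure {y | ∃ t > n, φ t x = y}) ∧
      closure {z | ∃ t : ℝ, φ t x = z} =
        (⋂ n : ℝ, closure {y | ∃ t > n, φ t x = y}) :=
  mem_interior_omega_implies_recurrent_Qset_general φ hcont hadd x hint
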